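/- Let F be a homeomorphism of the closed annulus Ā = (ℝ/ℤ) × [0,1] isotopic to the identity with the intersection property, let f be a lift of F to ℝ × [0,1], and let z be a positively recurrent point of F. Then the set E(z) is a nonempty bounded subset of ℝ; in particular ρ⁻(f; z) and ρ⁺(f; z) are real numbers. -/

import Mathlib

open Set Filter Topology MeasureTheory Function

noncomputable section

/-- The (generalized) annulus over a subset `J ⊆ ℝ`: for `J = Ioo 0 1` this is the
open annulus `(ℝ/ℤ) × (0,1)`, and for `J = Icc 0 1` the closed annulus `(ℝ/ℤ) × [0,1]`. -/
abbrev Ann (J : Set ℝ) : Type := AddCircle (1 : ℝ) × J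

/-- The universal cover `ℝ × J` of the annulus `Ann J`. -/
abbrev AnnCov (J : Set ℝ) : Type := ℝ × J

/-- The covering projection `π : ℝ × J → (ℝ/ℤ) × J`, `(x, y) ↦ (x + ℤ, y)`. -/
def covProj {J : Set ℝ} (p : AnnCov J) : Ann J := ((p.1 : AddCircle (1 : ℝ)), p.2)

/-- The deck transformation `T^k : (x, y) ↦ (x + k, y)`. -/
def deckT {J : Set ℝ} (k : ℤ) (p : AnnCov J) : AnnCov J := (p.1 + k, p.2)

/-- `f` is a lift of `F` to the universal cover: `π ∘ f = F ∘ π`. -/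
def IsLift {J : Set ℝ} (F : Ann J → Ann J) (f : AnnCov J → AnnCov J) : Prop :=
  ∀ p, covProj (f p) = F (covProj p)

/-- A homeomorphism `F` is isotopic to the identity: there is a continuous family
`(F_t)_{t ∈ [0,1]}` of homeomorphisms with `F_0 = id` and `F_1 = F`. -/
def IsotopicToId {X : Type*} [TopologicalSpace X] (F : X ≃ₜ X) : Prop :=
  ∃ H : C(unitInterval × X, X),
    (∀ z, H (0, z) = z) ∧ (∀ z, H (1, z) = F z) ∧
      ∀ t, ∃ G : X ≃ₜ X, ∀ z, H (t, z) = G z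

/-- A measure has total support if every nonempty open set has positive measure. -/
def TotalSupport {X : Type*} [TopologicalSpace X] [MeasurableSpace X]
    (μ : Measure X) : Prop :=
  ∀ U : Set X, IsOpen U → U.Nonempty → 0 < μ U

/-- `z` is a positively recurrent point of `F`: some subsequence of the forward
orbit of `z` converges to `z`. -/
def PosRec {X : Type*} [TopologicalSpace X] (F : X → X) (z : X) : Prop :=
  ∃ n : ℕ → ℕ, StrictMono n ∧ Tendsto (fun k => F^[n k] z) atTop (𝓝 z)

/-- `ρ` is the rotation number of `z` for the lift `f` of `F`: for every lift `z̃` of `z`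
and every subsequence of the forward orbit of `z` converging to `z`, the average
displacement of the first coordinate converges to `ρ`. -/
def HasRotNum {J : Set ℝ} (F : Ann J → Ann J) (f : AnnCov J → AnnCov J)
    (z : Ann J) (ρ : ℝ) : Prop :=
  ∀ zt : AnnCov J, covProj zt = z → ∀ n : ℕ → ℕ, StrictMono n →
    Tendsto (fun k => F^[n k] z) atTop (𝓝 z) →
    Tendsto (fun k => ((f^[n k] zt).1 - zt.1) / (n k : ℝ)) atTop (𝓝 ρ)

/-- The set of rotation numbers of positively recurrent points of `F`. -/
def RotSet {J : Set ℝ} (F : Ann J → Ann J) (f : AnnCov J → AnnCov J) : Set ℝ :=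
  {ρ | ∃ z, PosRec F z ∧ HasRotNum F f z ρ}

/-- The set `E(z) ⊆ ℝ ∪ {±∞}` of limits of average displacements along subsequences
of the forward orbit of `z` converging to `z`. -/
def Eset {J : Set ℝ} (F : Ann J → Ann J) (f : AnnCov J → AnnCov J)
    (z : Ann J) (zt : AnnCov J) : Set EReal :=
  {ρ | ∃ n : ℕ → ℕ, StrictMono n ∧
    Tendsto (fun k => F^[n k] z) atTop (𝓝 z) ∧
    Tendsto (fun k => ((((f^[n k] zt).1 - zt.1) / (n k : ℝ) : ℝ) : EReal)) atTop (𝓝 ρ)}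

/-- `ρ⁻(f; z) = inf E(z)`. -/
def rhoMinus {J : Set ℝ} (F : Ann J → Ann J) (f : AnnCov J → AnnCov J)
    (z : Ann J) (zt : AnnCov J) : EReal := sInf (Eset F f z zt)

/-- `ρ⁺(f; z) = sup E(z)`. -/
def rhoPlus {J : Set ℝ} (F : Ann J → Ann J) (f : AnnCov J → AnnCov J)
    (z : Ann J) (zt : AnnCov J) : EReal := sSup (Eset F f z zt)

/-- `z` is a `k`-prime-periodic point of `F`: `F^k z = z` and `F^l z ≠ z` for `1 ≤ l < k`. -/
def PerPrime {X : Type*} (F : X → X) (k : ℕ) (z : X) : Prop :=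
  F^[k] z = z ∧ ∀ l, 0 < l → l < k → F^[l] z ≠ z

/-- `C` is an essential circle in the annulus: the image of an injective continuous map
from the circle which is not null-homotopic. -/
def IsEssentialCircle {J : Set ℝ} (C : Set (Ann J)) : Prop :=
  ∃ γ : C(AddCircle (1 : ℝ), Ann J), Function.Injective γ ∧ Set.range γ = C ∧
    ∀ c : Ann J, ¬ γ.Homotopic (ContinuousMap.const _ c)

/-- `F` has the intersection property: every essential circle meets its image. -/
def IntersectionProp {J : Set ℝ} (F : Ann J → Ann J) : Prop :=
  ∀ C : Set (Ann J), IsEssentialCircle C → (C ∩ F '' C).Nonempty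


/-! A lift `f` of a homeomorphism of the annulus satisfies `f ∘ T = T^k ∘ f` for the deck
transformation `T` and a fixed integer `k`, and since `f⁻¹` is a lift as well, `k = ±1`. Hence
`f ∘ f` commutes with `T`, so its horizontal displacement `p₁(f² p) - p₁(p)` is continuous and
`1`-periodic, and therefore bounded by compactness of `[0,1] × [0,1]`. The displacement of `f^n`
then grows at most linearly, so the averages `(p₁(fⁿ z̃) - p₁(z̃))/n` stay in a compact interval
`[-C, C]`: every element of `E(z)` is a real number in `[-C, C]`, and a limit point of these
averages along the recurrence times of `z` lies in `E(z)`. -/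

section Deck

variable {J : Set ℝ}

@[simp]
lemma deckT_fst (m : ℤ) (p : AnnCov J) : (deckT m p).1 = p.1 + m := rfl

@[simp]
lemma deckT_snd (m : ℤ) (p : AnnCov J) : (deckT m p).2 = p.2 := rfl

@[simp]
lemma deckT_zero (p : AnnCov J) : deckT 0 p = p := by
  simp [deckT]

lemma deckT_deckT (m n : ℤ) (p : AnnCov J) : deckT m (deckT n p) = deckT (m + n) p := by
  ext <;> simp; ring

lemma deckT_left_injective (p : AnnCov J) : Injective fun m : ℤ => deckT m p := by
  intro m n h
  exact_mod_cast add_left_cancel (congrArg Prod.fst h)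

lemma continuous_deckT (m : ℤ) : Continuous (deckT m : AnnCov J → AnnCov J) :=
  (continuous_fst.add continuous_const).prodMk continuous_snd

@[simp]
lemma covProj_deckT (m : ℤ) (p : AnnCov J) : covProj (deckT m p) = covProj p := by
  simp [covProj, deckT]

lemma exists_deckT_of_covProj_eq {p q : AnnCov J} (h : covProj p = covProj q) :
    ∃ m : ℤ, q = deckT m p := by
  obtain ⟨h₁, h₂⟩ := Prod.mk.inj h
  obtain ⟨m, hm⟩ := AddSubgroup.mem_zmultiples_iff.mp (QuotientAddGroup.eq.mp h₁)
  refine ⟨m, Prod.ext ?_ h₂.symm⟩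
  simp only [zsmul_eq_mul, mul_one] at hm
  simp [hm]

lemma exists_deckT_eq_of_covProj_eq {X : Type*} [TopologicalSpace X] [PreconnectedSpace X]
    {g h : X → AnnCov J} (hg : Continuous g) (hh : Continuous h)
    (hgh : ∀ x, covProj (h x) = covProj (g x)) : ∃ c : ℤ, ∀ x, g x = deckT c (h x) := by
  rcases isEmpty_or_nonempty X with hX | ⟨⟨x₀⟩⟩
  · exact ⟨0, fun x => isEmptyElim x⟩
  choose c hc using fun x => exists_deckT_of_covProj_eq (hgh x)
  have hc_cont : Continuous c := by
    refine Int.isClosedEmbedding_coe_real.continuous_iff.mpr ?_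
    have hcast : ((↑) : ℤ → ℝ) ∘ c = fun x => (g x).1 - (h x).1 := by
      ext x
      simp [congrArg Prod.fst (hc x)]
    rw [hcast]
    fun_prop
  exact ⟨c x₀, fun x => (hc x).trans (congrArg (deckT · (h x))
    (PreconnectedSpace.constant inferInstance hc_cont))⟩

lemma IsLift.symm {F : Ann J ≃ₜ Ann J} {f : AnnCov J ≃ₜ AnnCov J} (hf : IsLift F f) :
    IsLift F.symm f.symm := fun p => by
  rw [F.eq_symm_apply, ← hf, f.apply_symm_apply]

end Deck

section Lift

variable {J : Set ℝ} [PreconnectedSpace J]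

lemma IsLift.exists_deckT_comm {F : Ann J → Ann J} {f : AnnCov J → AnnCov J}
    (hf : IsLift F f) (hc : Continuous f) :
    ∃ k : ℤ, ∀ (m : ℤ) (p : AnnCov J), f (deckT m p) = deckT (m * k) (f p) := by
  obtain ⟨k, hk⟩ := exists_deckT_eq_of_covProj_eq (hc.comp (continuous_deckT 1)) hc
    fun p => by simp [hf p, hf (deckT 1 p)]
  have hk_neg : ∀ p, f (deckT (-1) p) = deckT (-k) (f p) := fun p => by
    simpa [deckT_deckT] using congrArg (deckT (-k)) (hk (deckT (-1) p)).symm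
  refine ⟨k, fun m => ?_⟩
  induction m using Int.induction_on with
  | zero => simp
  | succ i ih =>
    intro p
    rw [add_comm, ← deckT_deckT, comp_apply.symm.trans (hk _), ih, deckT_deckT]
    ring_nf
  | pred i ih =>
    intro p
    rw [sub_eq_neg_add, ← deckT_deckT, hk_neg, ih, deckT_deckT]
    ring_nf

/-- Since `f⁻¹` is also a lift, the integer `k` of `IsLift.exists_deckT_comm` is `±1`. -/
lemma IsLift.comp_self_deckT {F : Ann J ≃ₜ Ann J} {f : AnnCov J ≃ₜ AnnCov J}
    (hf : IsLift F f) (m : ℤ) (p : AnnCov J) : f (f (deckT m p)) = deckT m (f (f p)) := by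
  obtain ⟨k, hk⟩ := hf.exists_deckT_comm f.continuous
  obtain ⟨k', hk'⟩ := hf.symm.exists_deckT_comm f.symm.continuous
  have hkk' : k * k' = 1 := deckT_left_injective p <| by
    simpa [hk, hk'] using f.symm_apply_apply (deckT 1 p)
  have hk_sq : k * k = 1 := by
    rcases Int.eq_one_or_neg_one_of_mul_eq_one hkk' with rfl | rfl <;> rfl
  rw [hk, hk, mul_assoc, hk_sq, mul_one]

end Lift

section Displacement

variable {J : Set ℝ}

lemma exists_abs_fst_sub_le_of_deckT_comm [CompactSpace J] {g : AnnCov J → AnnCov J}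
    (hg : Continuous g) (hcomm : ∀ (m : ℤ) p, g (deckT m p) = deckT m (g p)) :
    ∃ M : ℝ, ∀ p, |(g p).1 - p.1| ≤ M := by
  obtain ⟨M, hM⟩ := (isCompact_Icc (a := (0 : ℝ)) (b := 1)).prod (isCompact_univ (X := J))
    |>.exists_bound_of_continuousOn (f := fun p : AnnCov J => (g p).1 - p.1) (by fun_prop)
  refine ⟨M, fun p => ?_⟩
  have hp : p = deckT ⌊p.1⌋ (deckT (-⌊p.1⌋) p) := by simp [deckT_deckT]
  have hq : deckT (-⌊p.1⌋) p ∈ Icc (0 : ℝ) 1 ×ˢ univ := by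
    refine ⟨⟨?_, ?_⟩, trivial⟩ <;> simp <;> linarith [Int.floor_le p.1, Int.lt_floor_add_one p.1]
  rw [hp, hcomm]
  convert hM _ hq using 2
  simp only [deckT_fst, Real.norm_eq_abs]
  ring_nf

lemma abs_iterate_fst_sub_le {f : AnnCov J → AnnCov J} {M : ℝ}
    (hM : ∀ q, |(f (f q)).1 - q.1| ≤ M) (p : AnnCov J) :
    ∀ n : ℕ, |(f^[n] p).1 - p.1| ≤ n * (M + |(f p).1 - p.1|)
  | 0 => by simp
  | 1 => by simpa using (abs_nonneg _).trans (hM p)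
  | n + 2 => by
    have hM₀ : 0 ≤ M := (abs_nonneg _).trans (hM p)
    have ih := abs_iterate_fst_sub_le hM p n
    rw [iterate_succ_apply', iterate_succ_apply']
    calc |(f (f (f^[n] p))).1 - p.1|
        ≤ |(f (f (f^[n] p))).1 - (f^[n] p).1| + |(f^[n] p).1 - p.1| := abs_sub_le _ _ _
      _ ≤ M + n * (M + |(f p).1 - p.1|) := add_le_add (hM _) ih
      _ ≤ (n + 2 : ℕ) * (M + |(f p).1 - p.1|) := by
        push_cast
        nlinarith [abs_nonneg ((f p).1 - p.1)]

end Displacement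

lemma abs_div_natCast_le {x C : ℝ} {n : ℕ} (hC : 0 ≤ C) (h : |x| ≤ n * C) : |x / n| ≤ C := by
  rw [abs_div, Nat.abs_cast]
  exact div_le_of_le_mul₀ n.cast_nonneg hC (by linarith)

section Eset

variable {J : Set ℝ} {F : Ann J → Ann J} {f : AnnCov J → AnnCov J} {z : Ann J}
  {zt : AnnCov J} {C : ℝ}

lemma exists_coe_eq_of_mem_Eset (hC : ∀ n : ℕ, |((f^[n] zt).1 - zt.1) / n| ≤ C)
    {ρ : EReal} (hρ : ρ ∈ Eset F f z zt) : ∃ r : ℝ, ρ = r ∧ |r| ≤ C := by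
  obtain ⟨n, -, -, hlim⟩ := hρ
  have hclosed : IsClosed (((↑) : ℝ → EReal) '' Icc (-C) C) :=
    (isCompact_Icc.image continuous_coe_real_ereal).isClosed
  obtain ⟨r, hr, rfl⟩ := hclosed.mem_of_tendsto hlim
    (Eventually.of_forall fun k => mem_image_of_mem _ (abs_le.mp (hC (n k))))
  exact ⟨r, rfl, abs_le.mpr hr⟩

lemma Eset_nonempty (hz : PosRec F z) (hC : ∀ n : ℕ, |((f^[n] zt).1 - zt.1) / n| ≤ C) :
    (Eset F f z zt).Nonempty := by
  obtain ⟨n, hn, hrec⟩ := hz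
  obtain ⟨r, -, φ, hφ, hlim⟩ :=
    isCompact_Icc.tendsto_subseq fun k => abs_le.mp (hC (n k))
  exact ⟨r, n ∘ φ, hn.comp hφ, hrec.comp hφ.tendsto_atTop, EReal.tendsto_coe.mpr hlim⟩

end Eset

lemma EReal.exists_coe_eq_of_coe_le_of_le_coe {x : EReal} {a b : ℝ} (ha : (a : EReal) ≤ x)
    (hb : x ≤ b) : ∃ r : ℝ, x = r :=
  ⟨x.toReal, (EReal.coe_toReal (ne_top_of_le_ne_top (EReal.coe_ne_top b) hb)
    (ne_bot_of_le_ne_bot (EReal.coe_ne_bot a) ha)).symm⟩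

lemma EReal.exists_sInf_eq_coe_and_sSup_eq_coe {S : Set EReal} {C : ℝ} (hS : S.Nonempty)
    (hC : ∀ ρ ∈ S, ∃ r : ℝ, ρ = r ∧ |r| ≤ C) :
    (∃ a : ℝ, sInf S = a) ∧ ∃ b : ℝ, sSup S = b := by
  have hle : ∀ ρ ∈ S, ((-C : ℝ) : EReal) ≤ ρ ∧ ρ ≤ (C : ℝ) := fun ρ hρ => by
    obtain ⟨r, rfl, hr⟩ := hC ρ hρ
    exact ⟨EReal.coe_le_coe_iff.mpr (abs_le.mp hr).1, EReal.coe_le_coe_iff.mpr (abs_le.mp hr).2⟩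
  obtain ⟨ρ, hρ⟩ := hS
  exact ⟨EReal.exists_coe_eq_of_coe_le_of_le_coe (le_sInf fun σ hσ => (hle σ hσ).1)
      ((sInf_le hρ).trans (hle ρ hρ).2),
    EReal.exists_coe_eq_of_coe_le_of_le_coe ((hle ρ hρ).1.trans (le_sSup hρ))
      (sSup_le fun σ hσ => (hle σ hσ).2)⟩

theorem Eset_nonempty_bounded_closed_annulus_general
    (F : Ann (Set.Icc (0 : ℝ) 1) ≃ₜ Ann (Set.Icc (0 : ℝ) 1))
    (f : AnnCov (Set.Icc (0 : ℝ) 1) ≃ₜ AnnCov (Set.Icc (0 : ℝ) 1)) (hf : IsLift (⇑F) (⇑f))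
    (z : Ann (Set.Icc (0 : ℝ) 1)) (hz : PosRec (⇑F) z)
    (zt : AnnCov (Set.Icc (0 : ℝ) 1)) :
    (Eset (⇑F) (⇑f) z zt).Nonempty ∧
      (∃ C : ℝ, ∀ ρ ∈ Eset (⇑F) (⇑f) z zt, ∃ r : ℝ, ρ = (r : EReal) ∧ |r| ≤ C) ∧
      (∃ a : ℝ, rhoMinus (⇑F) (⇑f) z zt = (a : EReal)) ∧
      (∃ b : ℝ, rhoPlus (⇑F) (⇑f) z zt = (b : EReal)) := by
  obtain ⟨M, hM⟩ := exists_abs_fst_sub_le_of_deckT_comm (f.continuous.comp f.continuous)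
    hf.comp_self_deckT
  have hM₀ : 0 ≤ M := (abs_nonneg _).trans (hM zt)
  have hC : ∀ n : ℕ, |((f^[n] zt).1 - zt.1) / n| ≤ M + |(f zt).1 - zt.1| := fun n =>
    abs_div_natCast_le (by positivity) (abs_iterate_fst_sub_le hM zt n)
  have hbdd : ∀ ρ ∈ Eset F f z zt, ∃ r : ℝ, ρ = r ∧ |r| ≤ _ :=
    fun ρ => exists_coe_eq_of_mem_Eset hC
  exact ⟨Eset_nonempty hz hC, ⟨_, hbdd⟩,
    EReal.exists_sInf_eq_coe_and_sSup_eq_coe (Eset_nonempty hz hC) hbdd⟩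

/-- For a homeomorphism of the closed annulus isotopic to the identity with the
intersection property and a positively recurrent point `z`, the set `E(z)` is a nonempty
bounded subset of `ℝ`; in particular `ρ⁻(f; z)` and `ρ⁺(f; z)` are real numbers. -/
theorem Eset_nonempty_bounded_closed_annulus
    (F : Ann (Set.Icc (0 : ℝ) 1) ≃ₜ Ann (Set.Icc (0 : ℝ) 1)) (hFI : IsotopicToId F)
    (hint : IntersectionProp (⇑F))
    (f : AnnCov (Set.Icc (0 : ℝ) 1) ≃ₜ AnnCov (Set.Icc (0 : ℝ) 1)) (hf : IsLift (⇑F) (⇑f))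
    (z : Ann (Set.Icc (0 : ℝ) 1)) (hz : PosRec (⇑F) z)
    (zt : AnnCov (Set.Icc (0 : ℝ) 1)) (hzt : covProj zt = z) :
    (Eset (⇑F) (⇑f) z zt).Nonempty ∧
      (∃ C : ℝ, ∀ ρ ∈ Eset (⇑F) (⇑f) z zt, ∃ r : ℝ, ρ = (r : EReal) ∧ |r| ≤ C) ∧
      (∃ a : ℝ, rhoMinus (⇑F) (⇑f) z zt = (a : EReal)) ∧
      (∃ b : ℝ, rhoPlus (⇑F) (⇑f) z zt = (b : EReal)) :=
  Eset_nonempty_bounded_closed_annulus_general F f hf z hz zt
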